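/- There is no correct compositional translation τ from SYNCSIMPLE to LOCKSIMPLE with two locks (any initial store) of blocking type (P_1P_1, P_1P_1), i.e., where both τ(!) and τ(?) have blocking type P_1P_1 on the same lock. -/

import Mathlib

/-- Symbols of SYNCSIMPLE: `!` (bang) and `?` (ques). -/
inductive SSym | bang | ques
deriving DecidableEq

/-- A SYNCSIMPLE subprocess: a string over {!,?} ending with `0` (false) or `✓` (true). -/
abbrev SSub := List SSym × Bool

/-- A SYNCSIMPLE process: a multiset of subprocesses. -/
abbrev SProc := Multiset SSub

/-- The SYS reduction: a leading `!` and a leading `?` of two subprocesses are consumed. -/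
def SysStep (P Q : SProc) : Prop :=
  ∃ (u1 u2 : List SSym) (b1 b2 : Bool) (R : SProc),
    P = (SSym.bang :: u1, b1) ::ₘ (SSym.ques :: u2, b2) ::ₘ R ∧
    Q = (u1, b1) ::ₘ (u2, b2) ::ₘ R

/-- A process is successful if it contains the subprocess `✓`. -/
def SSuccessful (P : SProc) : Prop := (([], true) : SSub) ∈ P

def SMayConv (P : SProc) : Prop :=
  ∃ Q, Relation.ReflTransGen SysStep P Q ∧ SSuccessful Q

def SMustConv (P : SProc) : Prop :=
  ∀ Q, Relation.ReflTransGen SysStep P Q → SMayConv Q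

/-- Lock operations: put `P_i` and take `T_i`. -/
inductive LOp | put | take
deriving DecidableEq

abbrev LSym (k : ℕ) := LOp × Fin k
abbrev LSub (k : ℕ) := List (LSym k) × Bool
abbrev LProc (k : ℕ) := Multiset (LSub k)
/-- The store of `k` locks: `true` = full (■), `false` = empty (□). -/
abbrev Store (k : ℕ) := Fin k → Bool

/-- LOCKSIMPLE step: `P_i` fills an empty lock `i` (blocks if full);
    `T_i` empties lock `i` and never blocks. -/
def LockStep {k : ℕ} : (LProc k × Store k) → (LProc k × Store k) → Prop :=
  fun s t => ∃ (i : Fin k) (u : List (LSym k)) (b : Bool) (R : LProc k),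
    ((s.1 = ((LOp.put, i) :: u, b) ::ₘ R ∧ s.2 i = false ∧
      t.1 = (u, b) ::ₘ R ∧ t.2 = Function.update s.2 i true) ∨
     (s.1 = ((LOp.take, i) :: u, b) ::ₘ R ∧
      t.1 = (u, b) ::ₘ R ∧ t.2 = Function.update s.2 i false))

def LSuccessful {k : ℕ} (s : LProc k × Store k) : Prop := (([], true) : LSub k) ∈ s.1

def LMayConv {k : ℕ} (s : LProc k × Store k) : Prop :=
  ∃ t, Relation.ReflTransGen LockStep s t ∧ LSuccessful t

def LMustConv {k : ℕ} (s : LProc k × Store k) : Prop :=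
  ∀ t, Relation.ReflTransGen LockStep s t → LMayConv t

/-- The compositional translation determined by the strings `tb = τ(!)` and `tq = τ(?)`,
    applied to a subprocess. -/
def transSub {k : ℕ} (tb tq : List (LSym k)) (u : SSub) : LSub k :=
  (u.1.flatMap (fun c => match c with | SSym.bang => tb | SSym.ques => tq), u.2)

/-- The compositional translation applied to a process. -/
def transProc {k : ℕ} (tb tq : List (LSym k)) (P : SProc) : LProc k :=
  P.map (transSub tb tq)

/-- Correctness of the compositional translation `(tb, tq)` with initial store `IS`:
    may- and must-convergence are preserved and reflected. -/
def Correct {k : ℕ} (IS : Store k) (tb tq : List (LSym k)) : Prop :=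
  ∀ P : SProc,
    (SMayConv P ↔ LMayConv (transProc tb tq P, IS)) ∧
    (SMustConv P ↔ LMustConv (transProc tb tq P, IS))

/-- The solo execution of the string `s` from store `IS` reaches the point where
    `(put, i) :: rest` remains and deadlocks there since lock `i` is full. -/
def SoloBlocked {k : ℕ} (IS : Store k) (s : List (LSym k)) (i : Fin k)
    (rest : List (LSym k)) : Prop :=
  ∃ C : Store k,
    Relation.ReflTransGen LockStep (({(s, false)} : LProc k), IS)
      (({((LOp.put, i) :: rest, false)} : LProc k), C) ∧
    C i = true

/-- Blocking type `P_i`: the blocking prefix is `R P_i` with `R` free of `P_i, T_i`. -/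
def BlockingTypeP {k : ℕ} (IS : Store k) (s : List (LSym k)) (i : Fin k) : Prop :=
  ∃ r rest, s = r ++ (LOp.put, i) :: rest ∧ (∀ x ∈ r, x.2 ≠ i) ∧
    SoloBlocked IS s i rest

/-- Blocking type `P_i P_i`: the blocking prefix is `R₁ P_i R₂ P_i` with
    `R₂` free of `P_i, T_i`, deadlocking exactly before the last `P_i`. -/
def BlockingTypePP {k : ℕ} (IS : Store k) (s : List (LSym k)) (i : Fin k) : Prop :=
  ∃ r1 r2 rest, s = r1 ++ (LOp.put, i) :: r2 ++ (LOp.put, i) :: rest ∧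
    (∀ x ∈ r2, x.2 ≠ i) ∧ SoloBlocked IS s i rest

/-!
Correctness makes the translation `(τ(!), false) | (τ(?), true)` of the must-convergent process
`!0 | ?✓` must-convergent, so it suffices to reach a state from which `✓` is unreachable. Such
a state is one *frozen* on a set `S` of locks: every lock of `S` is full and every component's
next operation on `S` is a put. Then no component can touch `S` again, so none terminates.

Both strings, run alone, block at a `P_i` on a full lock `i`. If the first `i`-operation of one
of them is `P_i`, running the other one alone freezes `{i}`. Otherwise a leading take can be
executed while both strings keep blocking at `P_i` from the new store (the solo run does not
read lock `i` before its first `T_i`, and a take on the other lock `j` only empties a lock that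
the solo run has to find empty anyway), so we recurse on the total length. When both strings
start with `P_j`, run `τ(!)` up to its block: if `j` is full there, `{i, j}` is frozen; if not,
`τ(?)` passes its `P_j`, and as there are only two locks its store now differs from its solo
store only at `i`, which it empties before reading; so it blocks at `P_i` too and `{i}` freezes.
-/

open Relation

section

variable {k : ℕ}

def soloRun : List (LSym k) → Store k → List (LSym k) × Store k
  | [], σ => ([], σ)
  | (LOp.put, l) :: u, σ =>
    if σ l then ((LOp.put, l) :: u, σ) else soloRun u (Function.update σ l true)
  | (LOp.take, l) :: u, σ => soloRun u (Function.update σ l false)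

def BlocksAt (i : Fin k) (u : List (LSym k)) (σ : Store k) : Prop :=
  ∃ r, (soloRun u σ).1 = (LOp.put, i) :: r

def firstOpOn (S : Finset (Fin k)) (u : List (LSym k)) : Option (LSym k) :=
  u.find? (·.2 ∈ S)

theorem firstOpOn_cons_of_mem {S : Finset (Fin k)} {c : LSym k} (h : c.2 ∈ S)
    (u : List (LSym k)) : firstOpOn S (c :: u) = some c := by
  simp [firstOpOn, h]

theorem firstOpOn_cons_of_notMem {S : Finset (Fin k)} {c : LSym k} (h : c.2 ∉ S)
    (u : List (LSym k)) : firstOpOn S (c :: u) = firstOpOn S u := by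
  simp [firstOpOn, h]

@[simp]
theorem soloRun_nil (σ : Store k) : soloRun [] σ = ([], σ) := rfl

theorem soloRun_take (l : Fin k) (u : List (LSym k)) (σ : Store k) :
    soloRun ((LOp.take, l) :: u) σ = soloRun u (Function.update σ l false) := rfl

theorem soloRun_put_of_full {l : Fin k} {σ : Store k} (h : σ l = true) (u : List (LSym k)) :
    soloRun ((LOp.put, l) :: u) σ = ((LOp.put, l) :: u, σ) := by
  simp [soloRun, h]

theorem soloRun_put_of_empty {l : Fin k} {σ : Store k} (h : σ l = false) (u : List (LSym k)) :
    soloRun ((LOp.put, l) :: u) σ = soloRun u (Function.update σ l true) := by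
  simp [soloRun, h]

theorem soloRun_fst_suffix (u : List (LSym k)) (σ : Store k) : (soloRun u σ).1 <:+ u := by
  induction u generalizing σ with
  | nil => exact List.suffix_rfl
  | cons c u ih =>
    obtain ⟨_ | _, l⟩ := c
    · cases h : σ l
      · rw [soloRun_put_of_empty h]; exact (ih _).trans (List.suffix_cons _ _)
      · rw [soloRun_put_of_full h]
    · exact (ih _).trans (List.suffix_cons _ _)

theorem soloRun_snd_eq_true {u r : List (LSym k)} {σ : Store k} {l : Fin k}
    (h : (soloRun u σ).1 = (LOp.put, l) :: r) : (soloRun u σ).2 l = true := by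
  induction u generalizing σ with
  | nil => simp at h
  | cons c u ih =>
    obtain ⟨_ | _, m⟩ := c
    · cases hm : σ m
      · rw [soloRun_put_of_empty hm] at h ⊢; exact ih h
      · rw [soloRun_put_of_full hm] at h ⊢
        simp only [List.cons.injEq, Prod.mk.injEq] at h
        exact h.1.2 ▸ hm
    · exact ih h

theorem BlocksAt.firstOpOn_eq {i : Fin k} {u : List (LSym k)} {σ : Store k}
    (h : BlocksAt i u σ) :
    firstOpOn {i} u = some (LOp.put, i) ∨ firstOpOn {i} u = some (LOp.take, i) := by
  obtain ⟨r, hr⟩ := h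
  have hmem : ((LOp.put, i) : LSym k) ∈ u :=
    (soloRun_fst_suffix u σ).subset (hr ▸ List.mem_cons_self)
  obtain ⟨⟨op, l⟩, hc⟩ := Option.isSome_iff_exists.mp
    (List.find?_isSome.mpr ⟨_, hmem, by simp⟩ : (firstOpOn {i} u).isSome)
  have hl : l = i := by simpa using List.find?_some hc
  subst hl
  cases op
  · exact Or.inl hc
  · exact Or.inr hc

theorem blocksAt_take {i l : Fin k} {u : List (LSym k)} {σ : Store k} :
    BlocksAt i ((LOp.take, l) :: u) σ ↔ BlocksAt i u (Function.update σ l false) := Iff.rfl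

theorem blocksAt_put_of_empty {i l : Fin k} {u : List (LSym k)} {σ : Store k}
    (h : σ l = false) :
    BlocksAt i ((LOp.put, l) :: u) σ ↔ BlocksAt i u (Function.update σ l true) := by
  rw [BlocksAt, soloRun_put_of_empty h]; rfl

theorem blocksAt_put_of_full {i l : Fin k} {u : List (LSym k)} {σ : Store k} (h : σ l = true) :
    BlocksAt i ((LOp.put, l) :: u) σ ↔ l = i := by
  simp [BlocksAt, soloRun_put_of_full h, eq_comm]

theorem blocksAt_update_of_ne {i l : Fin k} (hl : l ≠ i) {u : List (LSym k)} {σ : Store k}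
    (h : BlocksAt i u σ) : BlocksAt i u (Function.update σ l false) := by
  induction u generalizing σ with
  | nil => obtain ⟨r, hr⟩ := h; simp at hr
  | cons c u ih =>
    obtain ⟨_ | _, m⟩ := c
    · by_cases hml : m = l
      · subst hml
        cases hm : σ m
        · rwa [Function.update_eq_self_iff.mpr hm.symm]
        · exact absurd ((blocksAt_put_of_full hm).mp h) hl
      · have hm' : Function.update σ l false m = σ m := Function.update_of_ne hml _ _
        cases hm : σ m
        · rw [blocksAt_put_of_empty hm] at h
          rw [blocksAt_put_of_empty (hm'.trans hm), Function.update_comm (Ne.symm hml)]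
          exact ih h
        · rwa [blocksAt_put_of_full (hm'.trans hm), ← blocksAt_put_of_full hm]
    · rw [blocksAt_take] at h ⊢
      by_cases hml : m = l
      · subst hml
        rwa [Function.update_idem]
      · rw [Function.update_comm (Ne.symm hml)]
        exact ih h

theorem blocksAt_update_of_firstOpOn_eq_take {i : Fin k} {u : List (LSym k)} {σ : Store k}
    (hu : firstOpOn {i} u = some (LOp.take, i)) (v : Bool)
    (h : BlocksAt i u σ) : BlocksAt i u (Function.update σ i v) := by
  induction u generalizing σ with
  | nil => simp [firstOpOn] at hu
  | cons c u ih =>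
    obtain ⟨op, m⟩ := c
    by_cases hmi : m = i
    · subst hmi
      rw [firstOpOn_cons_of_mem (c := (op, m)) (Finset.mem_singleton_self m)] at hu
      rw [(Prod.mk.inj (Option.some.inj hu)).1, blocksAt_take] at h ⊢
      rwa [Function.update_idem]
    · rw [firstOpOn_cons_of_notMem (c := (op, m)) (by simpa using hmi)] at hu
      have hm' : Function.update σ i v m = σ m := Function.update_of_ne hmi _ _
      cases op
      · cases hm : σ m
        · rw [blocksAt_put_of_empty hm] at h
          rw [blocksAt_put_of_empty (hm'.trans hm), Function.update_comm (Ne.symm hmi)]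
          exact ih hu h
        · rwa [blocksAt_put_of_full (hm'.trans hm), ← blocksAt_put_of_full hm]
      · rw [blocksAt_take] at h ⊢
        rw [Function.update_comm (Ne.symm hmi)]
        exact ih hu h

theorem lockStep_put {l : Fin k} {σ : Store k} (h : σ l = false) (u : List (LSym k)) (b : Bool)
    (R : LProc k) :
    LockStep (((LOp.put, l) :: u, b) ::ₘ R, σ) ((u, b) ::ₘ R, Function.update σ l true) :=
  ⟨l, u, b, R, .inl ⟨rfl, h, rfl, rfl⟩⟩

theorem lockStep_take (l : Fin k) (σ : Store k) (u : List (LSym k)) (b : Bool) (R : LProc k) :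
    LockStep (((LOp.take, l) :: u, b) ::ₘ R, σ) ((u, b) ::ₘ R, Function.update σ l false) :=
  ⟨l, u, b, R, .inr ⟨rfl, rfl, rfl⟩⟩

theorem reflTransGen_lockStep_soloRun (u : List (LSym k)) (σ : Store k) (b : Bool)
    (R : LProc k) :
    ReflTransGen LockStep ((u, b) ::ₘ R, σ)
      (((soloRun u σ).1, b) ::ₘ R, (soloRun u σ).2) := by
  induction u generalizing σ with
  | nil => exact .refl
  | cons c u ih =>
    obtain ⟨_ | _, l⟩ := c
    · cases h : σ l
      · rw [soloRun_put_of_empty h]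
        exact .head (lockStep_put h u b R) (ih _)
      · rw [soloRun_put_of_full h]
    · exact .head (lockStep_take l σ u b R) (ih _)

theorem LockStep.exists_soloRun_eq_of_singleton {u : List (LSym k)} {b : Bool} {σ : Store k}
    {t : LProc k × Store k} (h : LockStep ({(u, b)}, σ) t) :
    ∃ u', t.1 = {(u', b)} ∧ soloRun u' t.2 = soloRun u σ := by
  obtain ⟨l, w, b', R, ⟨hs, hl, ht, hσ⟩ | ⟨hs, ht, hσ⟩⟩ := h
  · obtain ⟨⟨rfl, rfl⟩, rfl⟩ := (Multiset.singleton_eq_cons_iff _).mp hs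
    exact ⟨w, ht, by rw [hσ, soloRun_put_of_empty hl]⟩
  · obtain ⟨⟨rfl, rfl⟩, rfl⟩ := (Multiset.singleton_eq_cons_iff _).mp hs
    exact ⟨w, ht, by rw [hσ, soloRun_take]⟩

theorem soloRun_eq_of_reflTransGen_singleton {u v : List (LSym k)} {b : Bool} {σ δ : Store k}
    (h : ReflTransGen LockStep ({(u, b)}, σ) ({(v, b)}, δ)) : soloRun v δ = soloRun u σ := by
  suffices ∀ t, ReflTransGen LockStep ({(u, b)}, σ) t →
      ∃ u', t.1 = {(u', b)} ∧ soloRun u' t.2 = soloRun u σ by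
    obtain ⟨u', hu', hrun⟩ := this _ h
    obtain ⟨rfl, -⟩ := Prod.ext_iff.mp (Multiset.singleton_inj.mp hu')
    exact hrun
  intro t ht
  induction ht with
  | refl => exact ⟨u, rfl, rfl⟩
  | @tail t₁ _ _ hstep ih =>
    obtain ⟨u', hu', hrun⟩ := ih
    rw [← Prod.mk.eta (p := t₁), hu'] at hstep
    obtain ⟨u'', hu'', hrun'⟩ := LockStep.exists_soloRun_eq_of_singleton hstep
    exact ⟨u'', hu'', hrun'.trans hrun⟩

theorem SoloBlocked.blocksAt {IS : Store k} {s : List (LSym k)} {i : Fin k} {rest : List (LSym k)}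
    (h : SoloBlocked IS s i rest) : BlocksAt i s IS := by
  obtain ⟨C, hrun, hC⟩ := h
  exact ⟨rest, by rw [← soloRun_eq_of_reflTransGen_singleton hrun, soloRun_put_of_full hC]⟩

def Frozen (S : Finset (Fin k)) (s : LProc k × Store k) : Prop :=
  (∀ l ∈ S, s.2 l = true) ∧ ∀ p ∈ s.1, ∃ l ∈ S, firstOpOn S p.1 = some (LOp.put, l)

theorem Frozen.lockStep {S : Finset (Fin k)} {s t : LProc k × Store k} (h : Frozen S s)
    (hst : LockStep s t) : Frozen S t := by
  obtain ⟨hS, hM⟩ := h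
  obtain ⟨l, u, b, R, hcase⟩ := hst
  obtain ⟨op, hs, ht, ⟨v, hσ⟩, hput⟩ : ∃ op, s.1 = ((op, l) :: u, b) ::ₘ R ∧
      t.1 = (u, b) ::ₘ R ∧ (∃ v, t.2 = Function.update s.2 l v) ∧
      (op = LOp.put → s.2 l = false) := by
    rcases hcase with ⟨hs, hl, ht, hσ⟩ | ⟨hs, ht, hσ⟩
    exacts [⟨_, hs, ht, ⟨_, hσ⟩, fun _ => hl⟩, ⟨_, hs, ht, ⟨_, hσ⟩, nofun⟩]
  obtain ⟨l', hl'S, hfirst⟩ := hM _ (hs ▸ Multiset.mem_cons_self _ _)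
  have hlS : l ∉ S := by
    intro hlS
    rw [firstOpOn_cons_of_mem hlS] at hfirst
    obtain ⟨rfl, rfl⟩ := Prod.mk.inj (Option.some.inj hfirst)
    simp [hS l hlS] at hput
  refine ⟨fun m hm => ?_, fun p hp => ?_⟩
  · rw [hσ, Function.update_of_ne (ne_of_mem_of_not_mem hm hlS)]
    exact hS m hm
  · rw [ht] at hp
    rcases Multiset.mem_cons.mp hp with rfl | hp
    · exact ⟨l', hl'S, (firstOpOn_cons_of_notMem hlS u).symm.trans hfirst⟩
    · exact hM p (hs ▸ Multiset.mem_cons_of_mem hp)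

theorem Frozen.reflTransGen {S : Finset (Fin k)} {s t : LProc k × Store k} (h : Frozen S s)
    (hst : ReflTransGen LockStep s t) : Frozen S t := by
  induction hst with
  | refl => exact h
  | tail _ hstep ih => exact ih.lockStep hstep

theorem Frozen.not_lSuccessful {S : Finset (Fin k)} {s : LProc k × Store k} (h : Frozen S s) :
    ¬ LSuccessful s := by
  intro hs
  obtain ⟨l, -, hl⟩ := h.2 _ hs
  simp [firstOpOn] at hl

theorem Frozen.not_lMayConv {S : Finset (Fin k)} {s : LProc k × Store k} (h : Frozen S s) :
    ¬ LMayConv s :=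
  fun ⟨_, hst, hs⟩ => (h.reflTransGen hst).not_lSuccessful hs

theorem Frozen.not_lMustConv {S : Finset (Fin k)} {s : LProc k × Store k} (h : Frozen S s) :
    ¬ LMustConv s :=
  fun hs => h.not_lMayConv (hs s .refl)

theorem not_lMustConv_of_reflTransGen {s t : LProc k × Store k}
    (hst : ReflTransGen LockStep s t) (ht : ¬ LMustConv t) : ¬ LMustConv s :=
  fun hs => ht fun u hu => hs u (hst.trans hu)

theorem not_lMustConv_of_firstOpOn_eq_put {i : Fin k} {x y : List (LSym k)} {σ : Store k}
    (hx : firstOpOn {i} x = some (LOp.put, i)) (hy : BlocksAt i y σ) (b b' : Bool) :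
    ¬ LMustConv ((x, b) ::ₘ (y, b') ::ₘ 0, σ) := by
  obtain ⟨r, hr⟩ := hy
  rw [Multiset.cons_swap]
  refine not_lMustConv_of_reflTransGen (reflTransGen_lockStep_soloRun y σ b' _)
    (Frozen.not_lMustConv (S := {i}) ⟨by simpa using soloRun_snd_eq_true hr,
      fun p hp => ⟨i, Finset.mem_singleton_self i, ?_⟩⟩)
  simp only [Multiset.mem_cons, Multiset.notMem_zero, or_false] at hp
  rcases hp with rfl | rfl
  · simp [hr, firstOpOn]
  · exact hx

theorem not_lMustConv_of_take_head {i l : Fin k} {x y : List (LSym k)} {σ : Store k}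
    (hy : BlocksAt i y σ) (hyi : firstOpOn {i} y = some (LOp.take, i)) {b b' : Bool}
    (ih : BlocksAt i y (Function.update σ l false) →
      ¬ LMustConv ((x, b) ::ₘ (y, b') ::ₘ 0, Function.update σ l false)) :
    ¬ LMustConv ((((LOp.take, l) :: x), b) ::ₘ (y, b') ::ₘ 0, σ) := by
  refine not_lMustConv_of_reflTransGen (.single (lockStep_take l σ x b _)) (ih ?_)
  by_cases hli : l = i
  · exact hli ▸ blocksAt_update_of_firstOpOn_eq_take hyi false hy
  · exact blocksAt_update_of_ne hli hy

end

theorem fin_two_eq_or_eq_of_ne {i j : Fin 2} (h : j ≠ i) (l : Fin 2) : l = i ∨ l = j := by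
  omega

theorem not_lMustConv_of_put_heads {i j : Fin 2} (hji : j ≠ i) {x y : List (LSym 2)}
    {σ : Store 2} (hx : BlocksAt i ((LOp.put, j) :: x) σ) (hy : BlocksAt i ((LOp.put, j) :: y) σ)
    (hyi : firstOpOn {i} y = some (LOp.take, i)) (b b' : Bool) :
    ¬ LMustConv ((((LOp.put, j) :: x), b) ::ₘ ((LOp.put, j) :: y, b') ::ₘ 0, σ) := by
  obtain ⟨r, hr⟩ := hx
  set δ := (soloRun ((LOp.put, j) :: x) σ).2
  have hδi : δ i = true := soloRun_snd_eq_true hr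
  have hrun := reflTransGen_lockStep_soloRun ((LOp.put, j) :: x) σ b
    (((LOp.put, j) :: y, b') ::ₘ 0)
  rw [hr] at hrun
  cases hδj : δ j
  · have hσj : σ j = false := by
      cases h : σ j
      · rfl
      · exact absurd ((blocksAt_put_of_full h).mp hy) hji
    rw [blocksAt_put_of_empty hσj] at hy
    have hstore :
        Function.update δ j true = Function.update (Function.update σ j true) i true := by
      funext l
      rcases fin_two_eq_or_eq_of_ne hji l with rfl | rfl <;> simp [hδi, hji, hji.symm]
    have hy' : BlocksAt i y (Function.update δ j true) :=
      hstore ▸ blocksAt_update_of_firstOpOn_eq_take hyi true hy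
    have hstep : LockStep (((LOp.put, i) :: r, b) ::ₘ ((LOp.put, j) :: y, b') ::ₘ 0, δ)
        (((LOp.put, i) :: r, b) ::ₘ (y, b') ::ₘ 0, Function.update δ j true) := by
      rw [Multiset.cons_swap, Multiset.cons_swap _ (y, b')]
      exact lockStep_put hδj y b' _
    exact not_lMustConv_of_reflTransGen (hrun.tail hstep)
      (not_lMustConv_of_firstOpOn_eq_put (by simp [firstOpOn]) hy' b b')
  · refine not_lMustConv_of_reflTransGen hrun
      (Frozen.not_lMustConv (S := Finset.univ) ⟨fun l _ => ?_, fun p hp => ?_⟩)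
    · rcases fin_two_eq_or_eq_of_ne hji l with rfl | rfl
      exacts [hδi, hδj]
    · simp only [Multiset.mem_cons, Multiset.notMem_zero, or_false] at hp
      rcases hp with rfl | rfl
      exacts [⟨i, Finset.mem_univ _, by simp [firstOpOn]⟩,
        ⟨j, Finset.mem_univ _, by simp [firstOpOn]⟩]

theorem not_lMustConv_of_blocksAt {i : Fin 2} {x y : List (LSym 2)} {σ : Store 2}
    (hx : BlocksAt i x σ) (hy : BlocksAt i y σ) (b b' : Bool) :
    ¬ LMustConv ((x, b) ::ₘ (y, b') ::ₘ 0, σ) := by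
  induction hn : x.length + y.length using Nat.strong_induction_on
    generalizing x y σ b b' with
  | _ n ih =>
  have swap : ¬ LMustConv ((y, b') ::ₘ (x, b) ::ₘ 0, σ) →
      ¬ LMustConv ((x, b) ::ₘ (y, b') ::ₘ 0, σ) := by
    rw [Multiset.cons_swap]; exact id
  rcases hx.firstOpOn_eq with hxi | hxi
  · exact not_lMustConv_of_firstOpOn_eq_put hxi hy b b'
  rcases hy.firstOpOn_eq with hyi | hyi
  · exact swap (not_lMustConv_of_firstOpOn_eq_put hyi hx b' b)
  have hx₀ : x ≠ [] := by rintro rfl; simp [firstOpOn] at hxi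
  have hy₀ : y ≠ [] := by rintro rfl; simp [firstOpOn] at hyi
  obtain ⟨⟨_ | _, lx⟩, x', rfl⟩ := List.exists_cons_of_ne_nil hx₀
  · obtain ⟨⟨_ | _, ly⟩, y', rfl⟩ := List.exists_cons_of_ne_nil hy₀
    · have hlx : lx ≠ i := by rintro rfl; simp [firstOpOn_cons_of_mem] at hxi
      have hly : ly ≠ i := by rintro rfl; simp [firstOpOn_cons_of_mem] at hyi
      obtain rfl : ly = lx := (fin_two_eq_or_eq_of_ne hlx ly).resolve_left hly
      rw [firstOpOn_cons_of_notMem (by simpa using hly)] at hyi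
      exact not_lMustConv_of_put_heads hlx hx hy hyi b b'
    · exact swap (not_lMustConv_of_take_head hx hxi fun hx' =>
        ih _ (by simp only [List.length_cons] at hn ⊢; omega) (blocksAt_take.mp hy) hx' b' b rfl)
  · exact not_lMustConv_of_take_head hy hyi fun hy' =>
      ih _ (by simp only [List.length_cons] at hn ⊢; omega) (blocksAt_take.mp hx) hy' b b' rfl

def bangZeroParQuesTick : SProc := ([SSym.bang], false) ::ₘ ([SSym.ques], true) ::ₘ 0

theorem sysStep_bangZeroParQuesTick {Q : SProc} (h : SysStep bangZeroParQuesTick Q) :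
    Q = ([], false) ::ₘ ([], true) ::ₘ 0 := by
  obtain ⟨u₁, u₂, b₁, b₂, R, hP, rfl⟩ := h
  have h₁ : ((SSym.bang :: u₁, b₁) : SSub) ∈ bangZeroParQuesTick :=
    hP ▸ Multiset.mem_cons_self _ _
  have h₂ : ((SSym.ques :: u₂, b₂) : SSub) ∈ bangZeroParQuesTick :=
    hP ▸ Multiset.mem_cons_of_mem (Multiset.mem_cons_self _ _)
  simp only [bangZeroParQuesTick, Multiset.mem_cons, Multiset.mem_singleton, Prod.mk.injEq,
    List.cons.injEq, reduceCtorEq, true_and, false_and, Multiset.cons_zero, or_false,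
    false_or] at h₁ h₂
  obtain ⟨rfl, rfl⟩ := h₁
  obtain ⟨rfl, rfl⟩ := h₂
  simp only [bangZeroParQuesTick, Multiset.cons_zero, Multiset.cons_inj_right,
    Multiset.singleton_eq_cons_iff, true_and] at hP
  rw [← hP]

theorem not_sysStep_nil_par_nil (b b' : Bool) (Q : SProc) :
    ¬ SysStep (([], b) ::ₘ ([], b') ::ₘ 0) Q := by
  rintro ⟨u₁, u₂, b₁, b₂, R, hP, -⟩
  have h₁ : ((SSym.bang :: u₁, b₁) : SSub) ∈ (([], b) ::ₘ ([], b') ::ₘ 0 : SProc) :=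
    hP ▸ Multiset.mem_cons_self _ _
  simp at h₁

theorem sMustConv_bangZeroParQuesTick : SMustConv bangZeroParQuesTick := by
  have hsucc : SSuccessful (([], false) ::ₘ ([], true) ::ₘ 0) := by simp [SSuccessful]
  have hstep : SysStep bangZeroParQuesTick (([], false) ::ₘ ([], true) ::ₘ 0) :=
    ⟨[], [], false, true, 0, rfl, rfl⟩
  intro Q hQ
  rcases hQ.cases_head with rfl | ⟨Q', hQ', hQ'Q⟩
  · exact ⟨_, .single hstep, hsucc⟩
  · rw [sysStep_bangZeroParQuesTick hQ'] at hQ'Q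
    rcases hQ'Q.cases_head with rfl | ⟨Q'', hQ'', -⟩
    · exact ⟨_, .refl, hsucc⟩
    · exact absurd hQ'' (not_sysStep_nil_par_nil _ _ _)

theorem transProc_bangZeroParQuesTick {k : ℕ} (tb tq : List (LSym k)) :
    transProc tb tq bangZeroParQuesTick = (tb, false) ::ₘ (tq, true) ::ₘ 0 := by
  simp [transProc, transSub, bangZeroParQuesTick]

/-- for two locks (any initial store), there is no correct
compositional translation where both `τ(!)` and `τ(?)` have blocking type
`P_i P_i` on the same lock. -/
theorem no_blocking_type_PP_PP_same_lock :
    ∀ (IS : Store 2) (tb tq : List (LSym 2)) (i : Fin 2),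
      Correct IS tb tq →
      BlockingTypePP IS tb i → BlockingTypePP IS tq i → False := by
  intro IS tb tq i hC ⟨_, _, _, _, _, hb⟩ ⟨_, _, _, _, _, hq⟩
  have hmust := (hC bangZeroParQuesTick).2.mp sMustConv_bangZeroParQuesTick
  rw [transProc_bangZeroParQuesTick] at hmust
  exact not_lMustConv_of_blocksAt hb.blocksAt hq.blocksAt false true hmust
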